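/- arXiv:2004.08422 — 6 statements merged into one kernel-verified Lean document; each statement's English description precedes it below -/
import Mathlib

section
/- Let M = (M_p) and N = (N_p) be normalized positive log-convex sequences with finite associated functions ω_M, ω_N. If there exist A ≥ 1 and B > 0 such that ω_N(t) + log t ≤ ω_M(At) + B for all t > 0, then there exists A' ≥ 1 such that M_{p+1} ≤ (A')^{p+1} N_p for all p ∈ ℕ₀. -/
/-!
At `t = M_{p+1} / M_p` log-convexity makes `q ↦ t^q / M_q` increase up to `q = p + 1` and
decrease afterwards, so `ω_M(t) = log (t^{p+1} / M_{p+1})`. Evaluating the hypothesis at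
`s = t / A` and bounding `ω_N(s)` from below by its `p`-th term gives
`log M_{p+1} ≤ (p + 1) log A + B + log N_p`.
-/

/-- The (real-valued) associated function `ω_M(t) = sup_p log (t^p / M_p)`. -/
noncomputable def assocFnR (M : ℕ → ℝ) (t : ℝ) : ℝ :=
  ⨆ p : ℕ, Real.log (t ^ p / M p)

lemma apply_le_of_le_succ_of_succ_le {α : Type*} [Preorder α] {a : ℕ → α} {n : ℕ}
    (hup : ∀ q < n, a q ≤ a (q + 1)) (hdown : ∀ q ≥ n, a (q + 1) ≤ a q) (q : ℕ) :
    a q ≤ a n := by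
  rcases le_total q n with hq | hq
  · induction hq using Nat.decreasingInduction with
    | self => exact le_rfl
    | of_succ k hk ih => exact (hup k hk).trans ih
  · exact antitoneOn_nat_Ici_of_succ_le hdown Set.self_mem_Ici hq hq

section LogConvex

variable {M : ℕ → ℝ} (hpos : ∀ q, 0 < M q)
include hpos

lemma monotone_succ_div_of_sq_le_mul (hlc : ∀ q, M (q + 1) ^ 2 ≤ M q * M (q + 2)) :
    Monotone fun q => M (q + 1) / M q :=
  monotone_nat_of_le_succ fun q => by
    rw [div_le_div_iff₀ (hpos q) (hpos (q + 1))]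
    nlinarith [hlc q]

lemma pow_div_le_pow_succ_div_iff {t : ℝ} (ht : 0 < t) (q : ℕ) :
    t ^ q / M q ≤ t ^ (q + 1) / M (q + 1) ↔ M (q + 1) / M q ≤ t := by
  rw [div_le_div_iff₀ (hpos q) (hpos (q + 1)), div_le_iff₀ (hpos q), pow_succ,
    mul_assoc, mul_comm t, mul_le_mul_iff_right₀ (pow_pos ht q)]

lemma pow_succ_div_le_pow_div_iff {t : ℝ} (ht : 0 < t) (q : ℕ) :
    t ^ (q + 1) / M (q + 1) ≤ t ^ q / M q ↔ t ≤ M (q + 1) / M q := by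
  rw [div_le_div_iff₀ (hpos (q + 1)) (hpos q), le_div_iff₀ (hpos q), pow_succ,
    mul_assoc, mul_comm t, mul_le_mul_iff_right₀ (pow_pos ht q)]

lemma assocFnR_succ_div (hlc : ∀ q, M (q + 1) ^ 2 ≤ M q * M (q + 2)) (p : ℕ) :
    assocFnR M (M (p + 1) / M p) =
      Real.log ((M (p + 1) / M p) ^ (p + 1) / M (p + 1)) := by
  set t := M (p + 1) / M p
  have ht : 0 < t := div_pos (hpos _) (hpos _)
  have hmono := monotone_succ_div_of_sq_le_mul hpos hlc
  have hmax (q : ℕ) : t ^ q / M q ≤ t ^ (p + 1) / M (p + 1) := by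
    refine apply_le_of_le_succ_of_succ_le (a := fun q => t ^ q / M q)
      (fun q hq => ?_) (fun q hq => ?_) q
    · exact (pow_div_le_pow_succ_div_iff hpos ht q).2 (hmono (Nat.le_of_lt_succ hq))
    · exact (pow_succ_div_le_pow_div_iff hpos ht q).2 (hmono (Nat.le_of_succ_le hq))
  have hlog (q : ℕ) : Real.log (t ^ q / M q) ≤ Real.log (t ^ (p + 1) / M (p + 1)) :=
    Real.log_le_log (div_pos (pow_pos ht q) (hpos q)) (hmax q)
  exact le_antisymm (ciSup_le hlog) (le_ciSup ⟨_, Set.forall_mem_range.2 hlog⟩ (p + 1))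

end LogConvex

lemma le_pow_mul_exp_mul_of_assocFnR_le {M N : ℕ → ℝ} (hMpos : ∀ q, 0 < M q)
    (hNpos : ∀ q, 0 < N q) (hMlc : ∀ q, M (q + 1) ^ 2 ≤ M q * M (q + 2))
    (hNfin : ∀ t : ℝ, 0 < t → BddAbove (Set.range fun p : ℕ => Real.log (t ^ p / N p)))
    {A B : ℝ} (hA : 0 < A)
    (hAB : ∀ t : ℝ, 0 < t → assocFnR N t + Real.log t ≤ assocFnR M (A * t) + B) (p : ℕ) :
    M (p + 1) ≤ A ^ (p + 1) * Real.exp B * N p := by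
  set t := M (p + 1) / M p
  have ht : 0 < t := div_pos (hMpos _) (hMpos _)
  have hωM : assocFnR M t = Real.log (t ^ (p + 1) / M (p + 1)) := assocFnR_succ_div hMpos hMlc p
  clear_value t
  have hs : 0 < t / A := div_pos ht hA
  have hlower : Real.log ((t / A) ^ p / N p) ≤ assocFnR N (t / A) := le_ciSup (hNfin _ hs) p
  have hupper := hAB _ hs
  rw [mul_div_cancel₀ t hA.ne', hωM] at hupper
  have hMp := hMpos (p + 1)
  have hNp := hNpos p
  rw [← Real.log_le_log_iff hMp (by positivity), Real.log_mul (by positivity) hNp.ne',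
    Real.log_mul (by positivity) (Real.exp_pos B).ne', Real.log_exp, Real.log_pow]
  rw [Real.log_div (by positivity) hNp.ne', Real.log_pow, Real.log_div ht.ne' hA.ne'] at hlower
  rw [Real.log_div (by positivity) hMp.ne', Real.log_pow, Real.log_div ht.ne' hA.ne'] at hupper
  push_cast at hupper hlower ⊢
  linarith

theorem stmt4_general (M N : ℕ → ℝ) (hMpos : ∀ p, 0 < M p) (hNpos : ∀ p, 0 < N p)
    (hMlc : ∀ p : ℕ, 1 ≤ p → (M p) ^ 2 ≤ M (p - 1) * M (p + 1))
    (hNfin : ∀ t : ℝ, 0 < t → BddAbove (Set.range fun p : ℕ => Real.log (t ^ p / N p)))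
    (h : ∃ A B : ℝ, 1 ≤ A ∧ 0 < B ∧ ∀ t : ℝ, 0 < t →
      assocFnR N t + Real.log t ≤ assocFnR M (A * t) + B) :
    ∃ A' : ℝ, 1 ≤ A' ∧ ∀ p : ℕ, M (p + 1) ≤ A' ^ (p + 1) * N p := by
  obtain ⟨A, B, hA, hB, hAB⟩ := h
  have hexpB : 1 ≤ Real.exp B := Real.one_le_exp hB.le
  refine ⟨A * Real.exp B, one_le_mul_of_one_le_of_one_le hA hexpB, fun p => ?_⟩
  have hMlc' (q : ℕ) : M (q + 1) ^ 2 ≤ M q * M (q + 2) := hMlc (q + 1) q.succ_pos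
  calc M (p + 1) ≤ A ^ (p + 1) * Real.exp B * N p :=
        le_pow_mul_exp_mul_of_assocFnR_le hMpos hNpos hMlc' hNfin (zero_lt_one.trans_le hA) hAB p
    _ ≤ A ^ (p + 1) * Real.exp B ^ (p + 1) * N p := by
        gcongr
        · exact (hNpos p).le
        · exact le_self_pow₀ hexpB p.succ_ne_zero
    _ = (A * Real.exp B) ^ (p + 1) * N p := by rw [mul_pow]

/-- If the associated functions are finite and
`ω_N(t) + log t ≤ ω_M(A t) + B` for all `t > 0`, then `M_{p+1} ≤ (A')^{p+1} N_p` for some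
`A' ≥ 1` and all `p`. -/
theorem stmt4 (M N : ℕ → ℝ) (hMpos : ∀ p, 0 < M p) (hNpos : ∀ p, 0 < N p)
    (hMnorm : M 0 = 1) (hNnorm : N 0 = 1)
    (hMlc : ∀ p : ℕ, 1 ≤ p → (M p) ^ 2 ≤ M (p - 1) * M (p + 1))
    (hNlc : ∀ p : ℕ, 1 ≤ p → (N p) ^ 2 ≤ N (p - 1) * N (p + 1))
    (hMfin : ∀ t : ℝ, 0 < t → BddAbove (Set.range fun p : ℕ => Real.log (t ^ p / M p)))
    (hNfin : ∀ t : ℝ, 0 < t → BddAbove (Set.range fun p : ℕ => Real.log (t ^ p / N p)))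
    (h : ∃ A B : ℝ, 1 ≤ A ∧ 0 < B ∧ ∀ t : ℝ, 0 < t →
      assocFnR N t + Real.log t ≤ assocFnR M (A * t) + B) :
    ∃ A' : ℝ, 1 ≤ A' ∧ ∀ p : ℕ, M (p + 1) ≤ A' ^ (p + 1) * N p :=
  stmt4_general M N hMpos hNpos hMlc hNfin h
end

section
/- Let M = (M_p) be a normalized positive log-convex sequence. Then M_p = sup_{t>0} t^p / exp(ω_M(t)) for every p ∈ ℕ₀, where ω_M(t) = sup_{q∈ℕ₀} log(t^q/M_q). -/
/-- The associated function `ω_M(t) = sup_p log (t^p / M_p)`, with values in `[-∞,∞]`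
(for normalized sequences it takes values in `[0,∞]`). -/
noncomputable def assocFn (M : ℕ → ℝ) (t : ℝ) : EReal :=
  ⨆ q : ℕ, (Real.log (t ^ q / M q) : EReal)

private lemma ennreal_div_div_cancel {a b : ENNReal} (ha : a ≠ 0) (ha' : a ≠ ⊤)
    (hb : b ≠ 0) (hb' : b ≠ ⊤) : a / (a / b) = b := by
  have h1 : a / b ≠ 0 := by simp [ENNReal.div_eq_zero_iff, ha, hb']
  have h2 : a / b ≠ ⊤ := by simp [ENNReal.div_eq_top, ha', hb]
  exact ((ENNReal.eq_div_iff h1 h2).mpr (by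
    exact ENNReal.div_mul_cancel hb hb')).symm

private lemma chain_up (f : ℕ → ℝ) (p : ℕ) (h : ∀ q, q < p → f q ≤ f (q + 1)) :
    ∀ q, q ≤ p → f q ≤ f p := by
  induction p with
  | zero => intro q hq; simp [Nat.le_zero.mp hq]
  | succ n ih =>
    intro q hq
    rcases Nat.lt_succ_iff_lt_or_eq.mp (Nat.lt_succ_of_le hq) with h' | h'
    · exact (ih (fun r hr => h r (hr.trans (Nat.lt_succ_self n))) q
        (Nat.lt_succ_iff.mp h')).trans (h n (Nat.lt_succ_self n))
    · rw [h']

private lemma chain_down (f : ℕ → ℝ) (p : ℕ) (h : ∀ q, p ≤ q → f (q + 1) ≤ f q) :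
    ∀ q, p ≤ q → f q ≤ f p := by
  intro q hq
  induction q, hq using Nat.le_induction with
  | base => exact le_refl _
  | succ n hn ih => exact (h n hn).trans ih

/-- For a normalized positive log-convex sequence,
`M_p = sup_{t>0} t^p / exp(ω_M(t))` for every `p`. -/
theorem stmt5 (M : ℕ → ℝ) (hpos : ∀ p, 0 < M p) (hnorm : M 0 = 1)
    (hlc : ∀ p : ℕ, 1 ≤ p → (M p) ^ 2 ≤ M (p - 1) * M (p + 1)) :
    ∀ p : ℕ, ENNReal.ofReal (M p) =
      ⨆ t : {t : ℝ // 0 < t}, ENNReal.ofReal ((t : ℝ) ^ p) / EReal.exp (assocFn M t) := by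
  intro p
  -- the quotient sequence μ_q = M (q+1) / M q is monotone
  have hmu : ∀ q r : ℕ, q ≤ r → M (q + 1) / M q ≤ M (r + 1) / M r := by
    intro q r hqr
    induction r, hqr using Nat.le_induction with
    | base => exact le_refl _
    | succ n hn ih =>
      refine ih.trans ?_
      rw [div_le_div_iff₀ (hpos n) (hpos (n + 1))]
      have := hlc (n + 1) (Nat.le_add_left 1 n)
      simpa [sq, mul_comm] using this
  set t₀ : ℝ := M (p + 1) / M p with ht₀def
  have ht₀ : 0 < t₀ := div_pos (hpos _) (hpos _)
  -- key: the sequence q ↦ t₀^q / M q is maximal at q = p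
  have hkey : ∀ q : ℕ, t₀ ^ q / M q ≤ t₀ ^ p / M p := by
    have h1 : ∀ q, q < p → t₀ ^ q / M q ≤ t₀ ^ (q + 1) / M (q + 1) := by
      intro q hq
      rw [div_le_div_iff₀ (hpos q) (hpos (q + 1)), pow_succ, mul_assoc]
      refine mul_le_mul_of_nonneg_left ?_ (le_of_lt (pow_pos ht₀ q))
      have := hmu q p hq.le
      rw [div_le_div_iff₀ (hpos q) (hpos p)] at this
      rw [ht₀def, div_mul_eq_mul_div, le_div_iff₀ (hpos p)]
      linarith
    have h2 : ∀ q, p ≤ q → t₀ ^ (q + 1) / M (q + 1) ≤ t₀ ^ q / M q := by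
      intro q hq
      rw [div_le_div_iff₀ (hpos (q + 1)) (hpos q), pow_succ, mul_assoc]
      refine mul_le_mul_of_nonneg_left ?_ (le_of_lt (pow_pos ht₀ q))
      have := hmu p q hq
      rw [div_le_div_iff₀ (hpos p) (hpos q)] at this
      rw [ht₀def, div_mul_eq_mul_div, div_le_iff₀ (hpos p)]
      linarith
    intro q
    rcases le_or_gt q p with h | h
    · exact chain_up (fun q => t₀ ^ q / M q) p h1 q h
    · exact chain_down (fun q => t₀ ^ q / M q) p h2 q h.le
  have hMp0 : ENNReal.ofReal (M p) ≠ 0 := by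
    simp [ENNReal.ofReal_eq_zero, not_le, hpos p]
  -- at t₀ the associated function equals log (t₀^p / M p)
  have hassoc : assocFn M t₀ = (Real.log (t₀ ^ p / M p) : EReal) := by
    refine le_antisymm (iSup_le fun q => ?_) (le_iSup (fun q : ℕ => (Real.log (t₀ ^ q / M q) : EReal)) p)
    exact EReal.coe_le_coe_iff.mpr
      (Real.log_le_log (div_pos (pow_pos ht₀ q) (hpos q)) (hkey q))
  have hexp₀ : EReal.exp (assocFn M t₀) = ENNReal.ofReal (t₀ ^ p) / ENNReal.ofReal (M p) := by
    rw [hassoc, EReal.exp_coe, Real.exp_log (div_pos (pow_pos ht₀ p) (hpos p)),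
      ENNReal.ofReal_div_of_pos (hpos p)]
  refine le_antisymm ?_ (iSup_le fun t => ?_)
  · -- M p ≤ sup: witness t₀
    refine le_trans (le_of_eq ?_) (le_iSup (fun t : {t : ℝ // 0 < t} =>
      ENNReal.ofReal ((t : ℝ) ^ p) / EReal.exp (assocFn M t)) ⟨t₀, ht₀⟩)
    rw [hexp₀]
    exact (ennreal_div_div_cancel
      (by simp [ENNReal.ofReal_eq_zero, not_le, pow_pos ht₀ p]) ENNReal.ofReal_ne_top
      hMp0 ENNReal.ofReal_ne_top).symm
  · -- each term is ≤ M p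
    obtain ⟨t, ht⟩ := t
    have hlog : (Real.log (t ^ p / M p) : EReal) ≤ assocFn M t :=
      le_iSup (fun q : ℕ => (Real.log (t ^ q / M q) : EReal)) p
    have hexp : ENNReal.ofReal (t ^ p) / ENNReal.ofReal (M p) ≤ EReal.exp (assocFn M t) := by
      calc ENNReal.ofReal (t ^ p) / ENNReal.ofReal (M p)
          = EReal.exp ((Real.log (t ^ p / M p) : EReal)) := by
            rw [EReal.exp_coe, Real.exp_log (div_pos (pow_pos ht p) (hpos p)),
              ENNReal.ofReal_div_of_pos (hpos p)]
        _ ≤ _ := EReal.exp_monotone hlog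
    calc ENNReal.ofReal (t ^ p) / EReal.exp (assocFn M t)
        ≤ ENNReal.ofReal (t ^ p) / (ENNReal.ofReal (t ^ p) / ENNReal.ofReal (M p)) :=
          ENNReal.div_le_div_left hexp _
      _ = ENNReal.ofReal (M p) := ennreal_div_div_cancel
          (by simp [ENNReal.ofReal_eq_zero, not_le, pow_pos ht p]) ENNReal.ofReal_ne_top
          hMp0 ENNReal.ofReal_ne_top
end

section
/- Let M = (M_α)_{α∈ℕ₀^d} be a multi-indexed positive sequence with M_0 = 1, and define its associated function ω_M(t) = sup_{α∈ℕ₀^d, α_j=0 whenever t_j=0} log(|t^α|/M_α) for t ∈ ℝ^d (with 0^0 := 1). Then ω_M(t) < +∞ for all t ∈ ℝ^d if and only if lim_{|α|→∞} (M_α)^{1/|α|} = +∞. -/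
open scoped BigOperators
open Filter

private lemma rpow_inv_pow_aux (x : ℝ) (hx : 0 ≤ x) (n : ℕ) (hn : n ≠ 0) :
    (x ^ ((n : ℝ))⁻¹) ^ n = x := by
  rw [← Real.rpow_natCast (x ^ ((n : ℝ))⁻¹) n, ← Real.rpow_mul hx,
    inv_mul_cancel₀ (by exact_mod_cast hn), Real.rpow_one]

/-- For a multi-indexed positive normalized sequence `M` on `ℕ₀^d`, the
associated function `ω_M(t) = sup { log(|t^α|/M_α) : α_j = 0 whenever t_j = 0 }` is finite
for all `t ∈ ℝ^d` iff `(M_α)^{1/|α|} → ∞` as `|α| → ∞`. Finiteness of the supremum is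
expressed as boundedness above of the corresponding family of real numbers. -/
theorem stmt6 (d : ℕ) (M : (Fin d → ℕ) → ℝ) (hpos : ∀ α, 0 < M α)
    (hnorm : M 0 = 1) :
    (∀ t : Fin d → ℝ, BddAbove (Set.range
        (fun α : {α : Fin d → ℕ // ∀ j, t j = 0 → α j = 0} =>
          Real.log (|∏ j, (t j) ^ (α.1 j)| / M α.1)))) ↔
      Filter.Tendsto (fun α : Fin d → ℕ => (M α) ^ ((∑ j, α j : ℝ)⁻¹))
        (Filter.comap (fun α : Fin d → ℕ => ∑ j, α j) Filter.atTop) Filter.atTop := by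
  have hcs : ∀ α : Fin d → ℕ, (∑ j, (α j : ℝ)) = ((∑ j, α j : ℕ) : ℝ) := by
    intro α; push_cast; ring
  have hchar : (Filter.Tendsto (fun α : Fin d → ℕ => (M α) ^ ((∑ j, α j : ℝ)⁻¹))
        (Filter.comap (fun α : Fin d → ℕ => ∑ j, α j) Filter.atTop) Filter.atTop) ↔
      ∀ b : ℝ, ∃ N : ℕ, ∀ α : Fin d → ℕ, N ≤ ∑ j, α j →
        b ≤ (M α) ^ ((∑ j, α j : ℝ)⁻¹) := by
    rw [tendsto_atTop]
    constructor
    · intro h b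
      have h2 := h b
      rw [eventually_comap, eventually_atTop] at h2
      obtain ⟨N, hN⟩ := h2
      exact ⟨N, fun α hα => hN _ hα α rfl⟩
    · intro h b
      obtain ⟨N, hN⟩ := h b
      rw [eventually_comap, eventually_atTop]
      exact ⟨N, fun n hn α hα => hN α (hα ▸ hn)⟩
  rw [hchar]
  constructor
  · -- boundedness → growth
    intro hbdd
    by_contra hcon
    push_neg at hcon
    obtain ⟨b, hb⟩ := hcon
    set C := max b 1 with hCdef
    have hC1 : (1:ℝ) ≤ C := le_max_right _ _
    have hCpos : (0:ℝ) < C := lt_of_lt_of_le one_pos hC1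
    obtain ⟨B, hB⟩ := hbdd (fun _ => 2 * C)
    obtain ⟨N, hN⟩ : ∃ N : ℕ, B < N * Real.log 2 := by
      have hlog : 0 < Real.log 2 := Real.log_pos one_lt_two
      obtain ⟨N, hN⟩ := exists_nat_gt (B / Real.log 2)
      exact ⟨N, by rwa [div_lt_iff₀ hlog] at hN⟩
    obtain ⟨α, hα1, hα2⟩ := hb (max N 1)
    set n := ∑ j, α j with hn
    have hn1 : 1 ≤ n := le_trans (le_max_right N 1) hα1
    have hnN : N ≤ n := le_trans (le_max_left N 1) hα1
    have hn0 : n ≠ 0 := by omega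
    have htj : ∀ j : Fin d, (2 : ℝ) * C ≠ 0 := fun j => by positivity
    have hmem : Real.log (|∏ j, ((2:ℝ) * C) ^ (α j)| / M α) ≤ B := by
      exact hB ⟨⟨α, fun j hj => absurd hj (htj j)⟩, rfl⟩
    have hMlt : M α < C ^ n := by
      have h1 : M α ^ ((n : ℝ))⁻¹ < C := by
        rw [hcs α, ← hn] at hα2
        exact lt_of_lt_of_le hα2 (le_max_left _ _)
      have h2 : (M α ^ ((n : ℝ))⁻¹) ^ n < C ^ n :=
        pow_lt_pow_left₀ h1 (Real.rpow_nonneg (hpos α).le _) hn0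
      rwa [rpow_inv_pow_aux (M α) (hpos α).le n hn0] at h2
    have hprod : ∏ j, ((2:ℝ) * C) ^ (α j) = (2 * C) ^ n := by
      rw [hn, Finset.prod_pow_eq_pow_sum]
    have hratio : (2:ℝ) ^ n < (2 * C) ^ n / M α := by
      rw [lt_div_iff₀ (hpos α), mul_pow]
      calc (2:ℝ) ^ n * M α < 2 ^ n * C ^ n :=
            mul_lt_mul_of_pos_left hMlt (by positivity)
        _ = 2 ^ n * C ^ n := rfl
    have hlogr : (n : ℝ) * Real.log 2 < Real.log ((2 * C) ^ n / M α) := by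
      have := Real.log_lt_log (by positivity) hratio
      rwa [Real.log_pow] at this
    have habs : |∏ j, ((2:ℝ) * C) ^ (α j)| = (2 * C) ^ n := by
      rw [hprod, abs_of_pos (by positivity)]
    rw [habs] at hmem
    have hNn : (N : ℝ) * Real.log 2 ≤ (n : ℝ) * Real.log 2 := by
      have hlog : 0 < Real.log 2 := Real.log_pos one_lt_two
      have : (N : ℝ) ≤ (n : ℝ) := by exact_mod_cast hnN
      nlinarith
    linarith
  · -- growth → boundedness
    intro h t
    set R := 1 + ∑ j, |t j| with hRdef
    have hsum_nonneg : 0 ≤ ∑ j, |t j| := Finset.sum_nonneg fun j _ => abs_nonneg _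
    have hR1 : (1:ℝ) ≤ R := le_add_of_nonneg_right hsum_nonneg
    have hR0 : (0:ℝ) ≤ R := le_trans zero_le_one hR1
    have hRt : ∀ j, |t j| ≤ R := fun j => by
      have := Finset.single_le_sum (fun i (_ : i ∈ Finset.univ) => abs_nonneg (t i))
        (Finset.mem_univ j)
      simp only [hRdef]; linarith
    obtain ⟨N, hN⟩ := h R
    set S : Finset (Fin d → ℕ) := Fintype.piFinset (fun _ => Finset.range (N+1)) with hSdef
    have hS0 : (0 : Fin d → ℕ) ∈ S := by
      simp [hSdef, Fintype.mem_piFinset]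
    set f : (Fin d → ℕ) → ℝ := fun α => Real.log (|∏ j, (t j) ^ (α j)| / M α) with hfdef
    set B := S.sup' ⟨0, hS0⟩ f with hBdef
    refine ⟨max B 0, ?_⟩
    rintro x ⟨⟨α, hαt⟩, rfl⟩
    show f α ≤ max B 0
    by_cases h0 : ∑ j, α j = 0
    · have hα0 : α = 0 := by
        funext j
        have := (Finset.sum_eq_zero_iff.mp h0) j (Finset.mem_univ j)
        simpa using this
      subst hα0
      simp [hfdef, hnorm]
    · by_cases hcase : N ≤ ∑ j, α j
      · set n := ∑ j, α j with hn
        have hMge : R ^ n ≤ M α := by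
          have h1 : R ≤ M α ^ ((n : ℝ))⁻¹ := by
            have := hN α hcase
            rwa [hcs α, ← hn] at this
          have h2 : R ^ n ≤ (M α ^ ((n : ℝ))⁻¹) ^ n := pow_le_pow_left₀ hR0 h1 n
          rwa [rpow_inv_pow_aux (M α) (hpos α).le n h0] at h2
        have hprodle : |∏ j, (t j) ^ (α j)| ≤ R ^ n := by
          calc |∏ j, (t j) ^ (α j)| = ∏ j, |t j| ^ (α j) := by
                rw [Finset.abs_prod]
                exact Finset.prod_congr rfl fun j _ => abs_pow _ _
            _ ≤ ∏ j, R ^ (α j) :=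
                Finset.prod_le_prod (fun j _ => pow_nonneg (abs_nonneg _) _)
                  (fun j _ => pow_le_pow_left₀ (abs_nonneg _) (hRt j) _)
            _ = R ^ n := by rw [hn, Finset.prod_pow_eq_pow_sum]
        have hle1 : |∏ j, (t j) ^ (α j)| / M α ≤ 1 := by
          rw [div_le_one (hpos α)]
          exact le_trans hprodle hMge
        have : f α ≤ 0 := Real.log_nonpos (div_nonneg (abs_nonneg _) (hpos α).le) hle1
        exact le_trans this (le_max_right _ _)
      · have hαS : α ∈ S := by
          simp only [hSdef, Fintype.mem_piFinset]
          intro j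
          rw [Finset.mem_range]
          have hj : α j ≤ ∑ i, α i :=
            Finset.single_le_sum (fun i _ => Nat.zero_le (α i)) (Finset.mem_univ j)
          omega
        exact le_trans (Finset.le_sup' f hαS) (le_max_left _ _)
end

section
/- Let M = (M_α)_{α∈ℕ₀^d} and N = (N_α)_{α∈ℕ₀^d} be positive multi-indexed sequences satisfying: there exist H, C, B > 0 such that α^{α/2} M_β ≤ B C^{|α|} H^{|α+β|} N_{α+β} for all α, β ∈ ℕ₀^d (with 0^0 := 1). Then lim_{|α|→∞} (N_α)^{1/|α|} = +∞. -/
open scoped BigOperators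
open Filter

/-!
Put `β = 0` and pick a coordinate with `α_j ≥ |α|/d`. Since every factor of `α^{α/2}` is at
least `1`, this gives `α_j^{α_j/2} M_0 ≤ B (CH)^{|α|} N_α`, and taking `|α|`-th roots
`N_α^{1/|α|} ≥ min(M_0/B, 1) (CH)⁻¹ (|α|/d)^{1/(2d)}`, which tends to infinity.
-/

namespace Real

lemma min_one_le_rpow_inv_natCast {a : ℝ} (ha : 0 ≤ a) {n : ℕ} (hn : n ≠ 0) :
    min a 1 ≤ a ^ (n⁻¹ : ℝ) := by
  have hn' : (1 : ℝ) ≤ n := by exact_mod_cast Nat.one_le_iff_ne_zero.2 hn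
  have hmin : 0 ≤ min a 1 := le_min ha zero_le_one
  calc min a 1 ≤ min a 1 ^ (n⁻¹ : ℝ) :=
        self_le_rpow_of_le_one hmin (min_le_right a 1) (inv_le_one_of_one_le₀ hn')
    _ ≤ a ^ (n⁻¹ : ℝ) := rpow_le_rpow hmin (min_le_left a 1) (by positivity)

lemma div_rpow_le_rpow_self_half_rpow_inv {d m : ℝ} {n : ℕ} (hd : 0 < d) (hm : 1 ≤ m)
    (hn : n ≠ 0) (hnm : n ≤ d * m) :
    (n / d) ^ (1 / (2 * d)) ≤ (m ^ (m / 2)) ^ (n⁻¹ : ℝ) := by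
  rw [← rpow_mul (by positivity)]
  calc (n / d) ^ (1 / (2 * d)) ≤ m ^ (1 / (2 * d)) := by
        gcongr
        rwa [div_le_iff₀' hd]
    _ ≤ m ^ (m / 2 * (n⁻¹ : ℝ)) := by
        refine rpow_le_rpow_of_exponent_le hm ?_
        rw [div_mul_eq_mul_div, ← div_eq_mul_inv, div_div,
          div_le_div_iff₀ (by positivity) (by positivity)]
        linarith

lemma le_rpow_inv_of_rpow_self_half_mul_le {a d m K x : ℝ} {n : ℕ} (hd : 0 < d) (hm : 1 ≤ m)
    (hn : n ≠ 0) (hnm : n ≤ d * m) (ha : 0 ≤ a) (hK : 0 < K)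
    (h : m ^ (m / 2) * a ≤ K ^ n * x) :
    min a 1 * K⁻¹ * (n / d) ^ (1 / (2 * d)) ≤ x ^ (n⁻¹ : ℝ) := by
  have hmm : 0 ≤ m ^ (m / 2) := by positivity
  have hx : m ^ (m / 2) * a * (K ^ n)⁻¹ ≤ x := by
    rwa [← div_eq_mul_inv, div_le_iff₀' (by positivity)]
  calc min a 1 * K⁻¹ * (n / d) ^ (1 / (2 * d))
      ≤ a ^ (n⁻¹ : ℝ) * K⁻¹ * (m ^ (m / 2)) ^ (n⁻¹ : ℝ) := by
        gcongr
        · exact min_one_le_rpow_inv_natCast ha hn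
        · exact div_rpow_le_rpow_self_half_rpow_inv hd hm hn hnm
    _ = (m ^ (m / 2) * a * (K ^ n)⁻¹) ^ (n⁻¹ : ℝ) := by
        rw [mul_rpow (by positivity) (by positivity), mul_rpow hmm ha, inv_rpow (by positivity),
          pow_rpow_inv_natCast hK.le hn]
        ring
    _ ≤ x ^ (n⁻¹ : ℝ) := by gcongr

end Real

section MultiIndex

variable {ι : Type*} [Fintype ι]

lemma Fintype.exists_sum_le_card_mul (α : ι → ℕ) (hα : ∑ i, α i ≠ 0) :
    ∃ j, ∑ i, α i ≤ Fintype.card ι * α j := by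
  obtain ⟨i, -, -⟩ := Finset.exists_ne_zero_of_sum_ne_zero hα
  obtain ⟨j, -, hj⟩ := Finset.exists_le_of_sum_le (f := fun _ ↦ ∑ i, α i)
    (g := fun j ↦ Fintype.card ι * α j) ⟨i, Finset.mem_univ i⟩ (by simp [Finset.mul_sum])
  exact ⟨j, hj⟩

lemma one_le_natCast_rpow_self_half (k : ℕ) : 1 ≤ (k : ℝ) ^ ((k : ℝ) / 2) := by
  rcases Nat.eq_zero_or_pos k with rfl | hk
  · simp
  · exact Real.one_le_rpow (by exact_mod_cast hk) (by positivity)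

lemma natCast_rpow_self_half_le_prod (α : ι → ℕ) (j : ι) :
    (α j : ℝ) ^ ((α j : ℝ) / 2) ≤ ∏ i, (α i : ℝ) ^ ((α i : ℝ) / 2) := by
  classical
  rw [← Finset.mul_prod_erase _ _ (Finset.mem_univ j)]
  exact le_mul_of_one_le_right (by positivity)
    (Finset.one_le_prod fun i _ ↦ one_le_natCast_rpow_self_half (α i))

lemma le_rpow_inv_sum_of_prod_rpow_self_half_mul_le {a B K x : ℝ} (α : ι → ℕ)
    (hα : ∑ i, α i ≠ 0) (ha : 0 ≤ a) (hB : 0 < B) (hK : 0 < K)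
    (h : (∏ i, (α i : ℝ) ^ ((α i : ℝ) / 2)) * a ≤ B * K ^ (∑ i, α i) * x) :
    min (a / B) 1 * K⁻¹ *
        ((∑ i, α i : ℝ) / Fintype.card ι) ^ (1 / (2 * (Fintype.card ι : ℝ)))
      ≤ x ^ ((∑ i, α i : ℝ)⁻¹) := by
  obtain ⟨j, hj⟩ := Fintype.exists_sum_le_card_mul α hα
  have hcard : 0 < Fintype.card ι := Fintype.card_pos_iff.2 ⟨j⟩
  have hαj : 1 ≤ α j := Nat.one_le_iff_ne_zero.2 fun h0 ↦ hα (by simpa [h0] using hj)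
  push_cast [← Nat.cast_sum]
  refine Real.le_rpow_inv_of_rpow_self_half_mul_le (m := α j) (by exact_mod_cast hcard)
    (by exact_mod_cast hαj) hα (by exact_mod_cast hj) (div_nonneg ha hB.le) hK ?_
  rw [mul_div_assoc', div_le_iff₀ hB]
  calc (α j : ℝ) ^ ((α j : ℝ) / 2) * a ≤ (∏ i, (α i : ℝ) ^ ((α i : ℝ) / 2)) * a :=
        mul_le_mul_of_nonneg_right (natCast_rpow_self_half_le_prod α j) ha
    _ ≤ K ^ (∑ i, α i) * x * B := by linarith

end MultiIndex

theorem stmt8_general (d : ℕ) (M N : (Fin d → ℕ) → ℝ)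
    (hMpos : ∀ α, 0 < M α)
    (h : ∃ H C B : ℝ, 0 < H ∧ 0 < C ∧ 0 < B ∧ ∀ α β : Fin d → ℕ,
      (∏ j, ((α j : ℝ) ^ ((α j : ℝ) / 2))) * M β ≤
        B * C ^ (∑ j, α j) * H ^ (∑ j, (α j + β j)) * N (α + β)) :
    Filter.Tendsto (fun α : Fin d → ℕ => (N α) ^ ((∑ j, α j : ℝ)⁻¹))
      (Filter.comap (fun α : Fin d → ℕ => ∑ j, α j) Filter.atTop) Filter.atTop := by
  obtain ⟨H, C, B, hH, hC, hB, hMN⟩ := h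
  rcases Nat.eq_zero_or_pos d with rfl | hd
  · simp [comap_const_of_notMem (Ici_mem_atTop 1)]
  have hg : Tendsto (fun n : ℕ ↦
      min (M 0 / B) 1 * (C * H)⁻¹ * ((n : ℝ) / d) ^ (1 / (2 * (d : ℝ)))) atTop atTop :=
    ((tendsto_rpow_atTop (by positivity)).comp
      (tendsto_natCast_atTop_atTop.atTop_div_const (by exact_mod_cast hd))).const_mul_atTop
      (by have := hMpos 0; positivity)
  refine tendsto_atTop_mono' _ ?_ (hg.comp tendsto_comap)
  filter_upwards [preimage_mem_comap (eventually_ne_atTop 0)] with α hα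
  have hα0 := hMN α 0
  simp only [Pi.zero_apply, add_zero] at hα0
  simpa using le_rpow_inv_sum_of_prod_rpow_self_half_mul_le α hα (hMpos 0).le hB (mul_pos hC hH)
    (by rw [mul_pow]; linarith)

/-- If `α^{α/2} M_β ≤ B C^{|α|} H^{|α+β|} N_{α+β}` for some `H, C, B > 0` and
all `α, β ∈ ℕ₀^d`, then `(N_α)^{1/|α|} → ∞` as `|α| → ∞`.
Here `α^{α/2} = ∏_j α_j^{α_j/2}` with the convention `0^0 = 1` (via `rpow`). -/
theorem stmt8 (d : ℕ) (M N : (Fin d → ℕ) → ℝ)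
    (hMpos : ∀ α, 0 < M α) (hNpos : ∀ α, 0 < N α)
    (h : ∃ H C B : ℝ, 0 < H ∧ 0 < C ∧ 0 < B ∧ ∀ α β : Fin d → ℕ,
      (∏ j, ((α j : ℝ) ^ ((α j : ℝ) / 2))) * M β ≤
        B * C ^ (∑ j, α j) * H ^ (∑ j, (α j + β j)) * N (α + β)) :
    Filter.Tendsto (fun α : Fin d → ℕ => (N α) ^ ((∑ j, α j : ℝ)⁻¹))
      (Filter.comap (fun α : Fin d → ℕ => ∑ j, α j) Filter.atTop) Filter.atTop :=
  stmt8_general d M N hMpos h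
end

section
/- Let M = (M_α)_{α∈ℕ₀^d} be a normalized positive multi-sequence satisfying: there exists A ≥ 1 such that M_{α+e_j} ≤ A^{|α|+1} M_α for all α ∈ ℕ₀^d, 1 ≤ j ≤ d. Then there exist B₁, B₂ ≥ 1 such that (1+|t|)^{2(d+1)} exp(ω_M(t)) ≤ B₁ exp(ω_M(B₂ t)) for all t ∈ ℝ^d. -/
/-!
Multiplying the monomial `t^α` by the largest coordinate `t_j` produces the monomial `t^(α + e_j)`,
and `|t| ≤ √d |t_j|`. The growth condition `M_{α+e_j} ≤ A^{|α|+1} M_α` is exactly what absorbs the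
extra weight when `t` is replaced by `A t`, so `(1 + |t|) exp ω_M(t) ≤ (1 + √d) exp ω_M(A t)`.
Iterating this `2(d+1)` times gives the claim with `B₁ = (1 + √d)^{2(d+1)}`, `B₂ = A^{2(d+1)}`.
-/

open scoped BigOperators

/-- The (real-valued) associated function of a multi-indexed sequence:
`ω_M(t) = sup { log(|t^α|/M_α) : α_j = 0 whenever t_j = 0 }`. -/
noncomputable def assocFnMultiR (d : ℕ) (M : (Fin d → ℕ) → ℝ)
    (t : EuclideanSpace ℝ (Fin d)) : ℝ :=
  ⨆ α : {α : Fin d → ℕ // ∀ j, t j = 0 → α j = 0},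
    Real.log (|∏ j, (t j) ^ (α.1 j)| / M α.1)

open Real

lemma le_exp_iSup_log {ι : Type*} {f : ι → ℝ} (hf : ∀ i, 0 < f i)
    (hb : BddAbove (Set.range fun i => log (f i))) (i : ι) :
    f i ≤ exp (⨆ i, log (f i)) :=
  calc f i = exp (log (f i)) := (exp_log (hf i)).symm
    _ ≤ exp (⨆ i, log (f i)) := exp_le_exp.2 (le_ciSup hb i)

lemma mul_exp_iSup_log_le {ι : Type*} [Nonempty ι] {f : ι → ℝ} (hf : ∀ i, 0 < f i)
    {c K : ℝ} (hc : 0 < c) (h : ∀ i, c * f i ≤ K) : c * exp (⨆ i, log (f i)) ≤ K := by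
  have hfK : ∀ i, f i ≤ K / c := fun i => (le_div_iff₀' hc).2 (h i)
  have hK : 0 < K / c := (hf (Classical.arbitrary ι)).trans_le (hfK _)
  rw [← le_div_iff₀' hc]
  calc exp (⨆ i, log (f i)) ≤ exp (log (K / c)) :=
        exp_le_exp.2 (ciSup_le fun i => log_le_log (hf i) (hfK i))
    _ = K / c := exp_log hK

lemma EuclideanSpace.exists_norm_le_sqrt_card_mul_abs {ι : Type*} [Fintype ι] [Nonempty ι]
    (t : EuclideanSpace ℝ ι) : ∃ j, ‖t‖ ≤ √(Fintype.card ι) * |t j| := by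
  obtain ⟨j, hj⟩ := Finite.exists_max fun i => |t i|
  refine ⟨j, ?_⟩
  have hsum : ∑ i, t i ^ 2 ≤ Fintype.card ι * t j ^ 2 := by
    simpa using Finset.sum_le_card_nsmul Finset.univ (fun i => t i ^ 2) (t j ^ 2)
      fun i _ => sq_le_sq.2 (hj i)
  calc ‖t‖ = √(∑ i, t i ^ 2) := by simp [EuclideanSpace.norm_eq]
    _ ≤ √(Fintype.card ι * t j ^ 2) := sqrt_le_sqrt hsum
    _ = √(Fintype.card ι) * |t j| := by rw [sqrt_mul (Nat.cast_nonneg _), sqrt_sq_eq_abs]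

section AssocFn

variable {d : ℕ} {M : (Fin d → ℕ) → ℝ}

instance (t : EuclideanSpace ℝ (Fin d)) :
    Nonempty {α : Fin d → ℕ // ∀ j, t j = 0 → α j = 0} :=
  ⟨⟨0, fun _ _ => rfl⟩⟩

lemma abs_prod_pow_pos {t : EuclideanSpace ℝ (Fin d)} {α : Fin d → ℕ}
    (hα : ∀ j, t j = 0 → α j = 0) : 0 < |∏ j, t j ^ α j| := by
  refine abs_pos.2 (Finset.prod_ne_zero_iff.2 fun j _ => ?_)
  by_cases htj : t j = 0
  · simp [htj, hα j htj]
  · exact pow_ne_zero _ htj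

lemma prod_smul_pow (c : ℝ) (t : EuclideanSpace ℝ (Fin d)) (α : Fin d → ℕ) :
    ∏ j, (c • t) j ^ α j = c ^ (∑ j, α j) * ∏ j, t j ^ α j := by
  simp only [PiLp.smul_apply, smul_eq_mul, mul_pow, Finset.prod_mul_distrib,
    Finset.prod_pow_eq_pow_sum]

lemma div_le_exp_assocFnMultiR (hpos : ∀ α, 0 < M α) {t : EuclideanSpace ℝ (Fin d)}
    (hb : BddAbove (Set.range fun α : {α : Fin d → ℕ // ∀ j, t j = 0 → α j = 0} =>
      log (|∏ j, t j ^ α.1 j| / M α.1)))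
    {α : Fin d → ℕ} (hα : ∀ j, t j = 0 → α j = 0) :
    |∏ j, t j ^ α j| / M α ≤ exp (assocFnMultiR d M t) :=
  le_exp_iSup_log (f := fun β : {α : Fin d → ℕ // ∀ j, t j = 0 → α j = 0} =>
      |∏ j, t j ^ β.1 j| / M β.1) (fun β => div_pos (abs_prod_pow_pos β.2) (hpos β.1)) hb ⟨α, hα⟩

lemma mul_exp_assocFnMultiR_le (hpos : ∀ α, 0 < M α) {t : EuclideanSpace ℝ (Fin d)}
    {c K : ℝ} (hc : 0 < c)
    (h : ∀ α : Fin d → ℕ, (∀ j, t j = 0 → α j = 0) → c * (|∏ j, t j ^ α j| / M α) ≤ K) :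
    c * exp (assocFnMultiR d M t) ≤ K :=
  mul_exp_iSup_log_le (f := fun β : {α : Fin d → ℕ // ∀ j, t j = 0 → α j = 0} =>
      |∏ j, t j ^ β.1 j| / M β.1) (fun β => div_pos (abs_prod_pow_pos β.2) (hpos β.1)) hc
    fun β => h β.1 β.2

lemma div_le_exp_assocFnMultiR_smul (hpos : ∀ α, 0 < M α) {A : ℝ} (hA : 1 ≤ A)
    {t : EuclideanSpace ℝ (Fin d)}
    (hb : BddAbove (Set.range fun α : {α : Fin d → ℕ // ∀ j, (A • t) j = 0 → α j = 0} =>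
      log (|∏ j, (A • t) j ^ α.1 j| / M α.1)))
    {α : Fin d → ℕ} (hα : ∀ j, t j = 0 → α j = 0) :
    |∏ j, t j ^ α j| / M α ≤ exp (assocFnMultiR d M (A • t)) := by
  have hA₀ : A ≠ 0 := by positivity
  refine le_trans ?_ (div_le_exp_assocFnMultiR hpos hb fun j hj => hα j (by simpa [hA₀] using hj))
  refine div_le_div_of_nonneg_right ?_ (hpos α).le
  rw [prod_smul_pow, abs_mul, abs_pow, abs_of_nonneg (zero_le_one.trans hA)]
  exact le_mul_of_one_le_left (abs_nonneg _) (one_le_pow₀ hA)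

lemma abs_mul_div_le_exp_assocFnMultiR_smul (hpos : ∀ α, 0 < M α) {A : ℝ} (hA : 0 < A)
    (hdc : ∀ (α : Fin d → ℕ) (j : Fin d),
      M (α + fun i => if i = j then 1 else 0) ≤ A ^ ((∑ i, α i) + 1) * M α)
    {t : EuclideanSpace ℝ (Fin d)}
    (hb : BddAbove (Set.range fun α : {α : Fin d → ℕ // ∀ j, (A • t) j = 0 → α j = 0} =>
      log (|∏ j, (A • t) j ^ α.1 j| / M α.1)))
    {α : Fin d → ℕ} (hα : ∀ j, t j = 0 → α j = 0) {j : Fin d} (htj : t j ≠ 0) :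
    |t j| * |∏ i, t i ^ α i| / M α ≤ exp (assocFnMultiR d M (A • t)) := by
  set α' : Fin d → ℕ := α + fun i => if i = j then 1 else 0
  have hα' : ∀ i, (A • t) i = 0 → α' i = 0 := by
    intro i hi
    have hti : t i = 0 := by simpa [hA.ne'] using hi
    have hij : i ≠ j := fun h => htj (h ▸ hti)
    simp [α', hα i hti, hij]
  have hprod : |∏ i, (A • t) i ^ α' i| = A ^ ((∑ i, α i) + 1) * (|t j| * |∏ i, t i ^ α i|) := by
    have hsum : ∑ i, α' i = (∑ i, α i) + 1 := by simp [α', Finset.sum_add_distrib]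
    have hmono : ∏ i, t i ^ α' i = (∏ i, t i ^ α i) * t j := by
      simp only [α', Pi.add_apply, pow_add, Finset.prod_mul_distrib, pow_ite, pow_one, pow_zero,
        Finset.prod_ite_eq', Finset.mem_univ, if_true]
    rw [prod_smul_pow, hsum, hmono, abs_mul, abs_mul, abs_pow, abs_of_pos hA]
    ring
  have hpow : 0 < A ^ ((∑ i, α i) + 1) := by positivity
  calc |t j| * |∏ i, t i ^ α i| / M α
      = A ^ ((∑ i, α i) + 1) * (|t j| * |∏ i, t i ^ α i|) / (A ^ ((∑ i, α i) + 1) * M α) := by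
        rw [mul_div_mul_left _ _ hpow.ne']
    _ ≤ |∏ i, (A • t) i ^ α' i| / M α' := by
        rw [hprod]
        gcongr
        · exact hpos α'
        · exact hdc α j
    _ ≤ exp (assocFnMultiR d M (A • t)) := div_le_exp_assocFnMultiR hpos hb hα'

lemma one_add_norm_mul_exp_assocFnMultiR_le (hpos : ∀ α, 0 < M α) {A : ℝ} (hA : 1 ≤ A)
    (hdc : ∀ (α : Fin d → ℕ) (j : Fin d),
      M (α + fun i => if i = j then 1 else 0) ≤ A ^ ((∑ i, α i) + 1) * M α)
    {t : EuclideanSpace ℝ (Fin d)}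
    (hb : BddAbove (Set.range fun α : {α : Fin d → ℕ // ∀ j, (A • t) j = 0 → α j = 0} =>
      log (|∏ j, (A • t) j ^ α.1 j| / M α.1))) :
    (1 + ‖t‖) * exp (assocFnMultiR d M t) ≤ (1 + √d) * exp (assocFnMultiR d M (A • t)) := by
  refine mul_exp_assocFnMultiR_le hpos (by positivity) fun α hα => ?_
  set E := exp (assocFnMultiR d M (A • t))
  have hmono : |∏ j, t j ^ α j| / M α ≤ E := div_le_exp_assocFnMultiR_smul hpos hA hb hα
  have hnorm : ‖t‖ * (|∏ j, t j ^ α j| / M α) ≤ √d * E := by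
    rcases eq_or_ne t 0 with rfl | ht
    · simp only [norm_zero, zero_mul]
      positivity
    obtain ⟨j₀, -⟩ : ∃ j, t j ≠ 0 := by
      by_contra! h
      exact ht (by ext i; simp [h i])
    have : Nonempty (Fin d) := ⟨j₀⟩
    obtain ⟨j, hj⟩ := EuclideanSpace.exists_norm_le_sqrt_card_mul_abs t
    rw [Fintype.card_fin] at hj
    have htj : t j ≠ 0 := fun h => ht (norm_le_zero_iff.1 (by simpa [h] using hj))
    calc ‖t‖ * (|∏ j, t j ^ α j| / M α)
        ≤ √d * |t j| * (|∏ j, t j ^ α j| / M α) :=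
          mul_le_mul_of_nonneg_right hj (div_nonneg (abs_nonneg _) (hpos α).le)
      _ = √d * (|t j| * |∏ i, t i ^ α i| / M α) := by ring
      _ ≤ √d * E := by
          gcongr
          exact abs_mul_div_le_exp_assocFnMultiR_smul hpos (by positivity) hdc hb hα htj
  calc (1 + ‖t‖) * (|∏ j, t j ^ α j| / M α)
      = |∏ j, t j ^ α j| / M α + ‖t‖ * (|∏ j, t j ^ α j| / M α) := by ring
    _ ≤ E + √d * E := add_le_add hmono hnorm
    _ = (1 + √d) * E := by ring

lemma one_add_norm_pow_mul_exp_assocFnMultiR_le (hpos : ∀ α, 0 < M α)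
    (hfin : ∀ t : EuclideanSpace ℝ (Fin d), BddAbove (Set.range
      (fun α : {α : Fin d → ℕ // ∀ j, t j = 0 → α j = 0} =>
        log (|∏ j, (t j) ^ (α.1 j)| / M α.1))))
    {A : ℝ} (hA : 1 ≤ A)
    (hdc : ∀ (α : Fin d → ℕ) (j : Fin d),
      M (α + fun i => if i = j then 1 else 0) ≤ A ^ ((∑ i, α i) + 1) * M α)
    (n : ℕ) (t : EuclideanSpace ℝ (Fin d)) :
    (1 + ‖t‖) ^ n * exp (assocFnMultiR d M t) ≤
      (1 + √d) ^ n * exp (assocFnMultiR d M (A ^ n • t)) := by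
  induction n generalizing t with
  | zero => simp
  | succ n ih =>
    have hnorm : ‖t‖ ≤ ‖A • t‖ := by
      rw [norm_smul, norm_of_nonneg (zero_le_one.trans hA)]
      exact le_mul_of_one_le_left (norm_nonneg t) hA
    calc (1 + ‖t‖) ^ (n + 1) * exp (assocFnMultiR d M t)
        = (1 + ‖t‖) ^ n * ((1 + ‖t‖) * exp (assocFnMultiR d M t)) := by ring
      _ ≤ (1 + ‖A • t‖) ^ n * ((1 + √d) * exp (assocFnMultiR d M (A • t))) :=
          mul_le_mul (pow_le_pow_left₀ (by positivity) (by linarith) n)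
            (one_add_norm_mul_exp_assocFnMultiR_le hpos hA hdc (hfin _)) (by positivity)
            (by positivity)
      _ = (1 + √d) * ((1 + ‖A • t‖) ^ n * exp (assocFnMultiR d M (A • t))) := by ring
      _ ≤ (1 + √d) * ((1 + √d) ^ n * exp (assocFnMultiR d M (A ^ n • A • t))) :=
          mul_le_mul_of_nonneg_left (ih (A • t)) (by positivity)
      _ = (1 + √d) ^ (n + 1) * exp (assocFnMultiR d M (A ^ (n + 1) • t)) := by
          rw [smul_smul, ← pow_succ]
          ring

end AssocFn

theorem stmt10_general (d : ℕ) (M : (Fin d → ℕ) → ℝ) (hpos : ∀ α, 0 < M α)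
    (hfin : ∀ t : EuclideanSpace ℝ (Fin d), BddAbove (Set.range
      (fun α : {α : Fin d → ℕ // ∀ j, t j = 0 → α j = 0} =>
        Real.log (|∏ j, (t j) ^ (α.1 j)| / M α.1))))
    (hdc : ∃ A : ℝ, 1 ≤ A ∧ ∀ (α : Fin d → ℕ) (j : Fin d),
      M (α + fun i => if i = j then 1 else 0) ≤ A ^ ((∑ i, α i) + 1) * M α) :
    ∃ B₁ B₂ : ℝ, 1 ≤ B₁ ∧ 1 ≤ B₂ ∧ ∀ t : EuclideanSpace ℝ (Fin d),
      (1 + ‖t‖) ^ (2 * (d + 1)) * Real.exp (assocFnMultiR d M t) ≤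
        B₁ * Real.exp (assocFnMultiR d M (B₂ • t)) := by
  obtain ⟨A, hA, hdcA⟩ := hdc
  exact ⟨(1 + √d) ^ (2 * (d + 1)), A ^ (2 * (d + 1)),
    one_le_pow₀ (le_add_of_nonneg_right (sqrt_nonneg _)), one_le_pow₀ hA,
    one_add_norm_pow_mul_exp_assocFnMultiR_le hpos hfin hA hdcA _⟩

/-- If the normalized positive multi-sequence `M` satisfies
`M_{α+e_j} ≤ A^{|α|+1} M_α` (some `A ≥ 1`, all `α, j`) and its associated function is
finite (the defining family is bounded above for each `t`), then there are `B₁, B₂ ≥ 1`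
with `(1+|t|)^{2(d+1)} exp(ω_M(t)) ≤ B₁ exp(ω_M(B₂ t))` for all `t ∈ ℝ^d`. -/
theorem stmt10 (d : ℕ) (M : (Fin d → ℕ) → ℝ) (hpos : ∀ α, 0 < M α) (hnorm : M 0 = 1)
    (hfin : ∀ t : EuclideanSpace ℝ (Fin d), BddAbove (Set.range
      (fun α : {α : Fin d → ℕ // ∀ j, t j = 0 → α j = 0} =>
        Real.log (|∏ j, (t j) ^ (α.1 j)| / M α.1))))
    (hdc : ∃ A : ℝ, 1 ≤ A ∧ ∀ (α : Fin d → ℕ) (j : Fin d),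
      M (α + fun i => if i = j then 1 else 0) ≤ A ^ ((∑ i, α i) + 1) * M α) :
    ∃ B₁ B₂ : ℝ, 1 ≤ B₁ ∧ 1 ≤ B₂ ∧ ∀ t : EuclideanSpace ℝ (Fin d),
      (1 + ‖t‖) ^ (2 * (d + 1)) * Real.exp (assocFnMultiR d M t) ≤
        B₁ * Real.exp (assocFnMultiR d M (B₂ • t)) :=
  stmt10_general d M hpos hfin hdc
end

section
/- Let ω be a weight function, r > 0, and W_α^{(λ)} = exp(φ*_ω(λ|α|)/λ). Then ω(t) = O(t^{1/r}) as t → ∞ if and only if for every λ > 0 there exist C, D ≥ 1 such that α^{rα} ≤ C D^{|α|} W_α^{(λ)} for all α ∈ ℕ^d, where α^{rα} = ∏_j α_j^{r α_j}. -/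
open scoped BigOperators
open Filter Asymptotics

/-- The Young conjugate `φ*_ω(s) = sup_{t ≥ 0} (t s - ω(e^t))`. -/
noncomputable def youngConj (ω : ℝ → ℝ) (s : ℝ) : ℝ :=
  ⨆ t : {t : ℝ // 0 ≤ t}, ((t : ℝ) * s - ω (Real.exp (t : ℝ)))

/-- The weight matrix entry `W_α^{(λ)} = exp(φ*_ω(λ|α|)/λ)`. -/
noncomputable def Wmat (ω : ℝ → ℝ) (d : ℕ) (lam : ℝ) (α : Fin d → ℕ) : ℝ :=
  Real.exp (youngConj ω (lam * (∑ j, α j)) / lam)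


private lemma yc_bddAbove (ω : ℝ → ℝ) (hnonneg : ∀ t, 0 ≤ t → 0 ≤ ω t)
    (hγ : (fun t => Real.log t) =o[Filter.atTop] ω) {s : ℝ} (hs : 0 ≤ s) :
    BddAbove (Set.range fun t : {t : ℝ // 0 ≤ t} =>
      ((t : ℝ) * s - ω (Real.exp (t : ℝ)))) := by
  have hεpos : (0:ℝ) < 1 / (s + 1) := by positivity
  obtain ⟨U, hU⟩ := Filter.eventually_atTop.mp (hγ.def hεpos)
  set U' := max U 1 with hU'def
  refine ⟨max 0 ((max 0 (Real.log U')) * s), ?_⟩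
  rintro x ⟨⟨t, ht⟩, rfl⟩
  simp only
  rcases le_or_gt (Real.exp t) U' with hcase | hcase
  · have h1 : t ≤ Real.log U' := by
      have := Real.log_le_log (Real.exp_pos t) hcase
      rwa [Real.log_exp] at this
    have h2 : t * s ≤ max 0 (Real.log U') * s :=
      mul_le_mul_of_nonneg_right (le_trans h1 (le_max_right _ _)) hs
    have h3 : 0 ≤ ω (Real.exp t) := hnonneg _ (Real.exp_pos t).le
    calc t * s - ω (Real.exp t) ≤ t * s := by linarith
    _ ≤ max 0 (Real.log U') * s := h2
    _ ≤ max 0 (max 0 (Real.log U') * s) := le_max_right _ _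
  · have hUe : U ≤ Real.exp t := le_trans (le_max_left _ _) hcase.le
    have h1 := hU (Real.exp t) hUe
    rw [Real.norm_eq_abs, Real.norm_eq_abs, Real.log_exp,
      abs_of_nonneg ht, abs_of_nonneg (hnonneg _ (Real.exp_pos t).le)] at h1
    -- h1 : t ≤ (1/(s+1)) * ω (exp t), so (s+1) * t ≤ ω (exp t)
    have h2 : (s + 1) * t ≤ ω (Real.exp t) := by
      rw [div_mul_eq_mul_div, le_div_iff₀ (by linarith : (0:ℝ) < s + 1)] at h1
      linarith [h1]
    have : t * s - ω (Real.exp t) ≤ 0 := by nlinarith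
    exact le_trans this (le_max_left _ _)

private lemma yc_nonneg (ω : ℝ → ℝ) (hnonneg : ∀ t, 0 ≤ t → 0 ≤ ω t)
    (hω1 : ω 1 = 0)
    (hγ : (fun t => Real.log t) =o[Filter.atTop] ω) {s : ℝ} (hs : 0 ≤ s) :
    0 ≤ youngConj ω s := by
  have h0 : (0:ℝ) = ((⟨0, le_refl 0⟩ : {t:ℝ//0 ≤ t}) : ℝ) * s
      - ω (Real.exp ((⟨0, le_refl 0⟩ : {t:ℝ//0 ≤ t}) : ℝ)) := by
    simp [Real.exp_zero, hω1]
  have h1 := le_ciSup (yc_bddAbove ω hnonneg hγ hs) (⟨0, le_refl 0⟩ : {t:ℝ//0 ≤ t})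
  rw [youngConj]
  exact le_trans (le_of_eq h0) h1

private lemma yc_mono (ω : ℝ → ℝ) (hnonneg : ∀ t, 0 ≤ t → 0 ≤ ω t)
    (hγ : (fun t => Real.log t) =o[Filter.atTop] ω) {s s' : ℝ}
    (hs : 0 ≤ s) (hss : s ≤ s') : youngConj ω s ≤ youngConj ω s' := by
  haveI : Nonempty {t : ℝ // 0 ≤ t} := ⟨⟨0, le_refl 0⟩⟩
  apply ciSup_le
  rintro ⟨t, ht⟩
  have h1 : (t:ℝ) * s - ω (Real.exp t) ≤ (t:ℝ) * s' - ω (Real.exp t) := by nlinarith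
  exact le_trans h1 (le_ciSup (yc_bddAbove ω hnonneg hγ (le_trans hs hss)) ⟨t, ht⟩)

private lemma key_bound (r : ℝ) (hr : 0 < r) (u B : ℝ) (hu : 0 ≤ u) :
    u * (B - r * Real.log u) ≤ r * Real.exp (B / r) := by
  rcases eq_or_lt_of_le hu with h | hu'
  · rw [← h]; simp only [zero_mul]; positivity
  · have h1 : Real.log (Real.exp (B/r) / u) ≤ Real.exp (B/r) / u :=
      le_trans (Real.log_le_sub_one_of_pos (by positivity)) (by linarith)
    have h2 : B - r * Real.log u = r * Real.log (Real.exp (B/r) / u) := by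
      rw [Real.log_div (Real.exp_pos _).ne' hu'.ne', Real.log_exp]
      field_simp
    rw [h2]
    calc u * (r * Real.log (Real.exp (B/r) / u))
        ≤ u * (r * (Real.exp (B/r) / u)) :=
          mul_le_mul_of_nonneg_left (mul_le_mul_of_nonneg_left h1 hr.le) hu
      _ = r * Real.exp (B/r) := by field_simp

private lemma mul_log_mono {a b : ℝ} (ha : 1 ≤ a) (hab : a ≤ b) :
    a * Real.log a ≤ b * Real.log b :=
  mul_le_mul hab (Real.log_le_log (by linarith) hab) (Real.log_nonneg ha) (by linarith)

private lemma rev_dir (ω : ℝ → ℝ) (hcont : Continuous ω) (hmono : Monotone ω)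
    (hnonneg : ∀ t, 0 ≤ t → 0 ≤ ω t) (hω1 : ∀ t ∈ Set.Icc (0 : ℝ) 1, ω t = 0)
    (hα : ∃ L : ℝ, 1 ≤ L ∧ ∀ t : ℝ, 0 ≤ t → ω (2 * t) ≤ L * (ω t + 1))
    (hconv : ConvexOn ℝ (Set.Ici 0) (fun t => ω (Real.exp t)))
    (hγ : (fun t => Real.log t) =o[Filter.atTop] ω)
    (d : ℕ) (hd : 0 < d) (r : ℝ) (hr : 0 < r)
    (hω1' : ω 1 = 0)
    (h : ∀ lam : ℝ, 0 < lam → ∃ C D : ℝ, 1 ≤ C ∧ 1 ≤ D ∧ ∀ α : Fin d → ℕ,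
        (∏ j, ((α j : ℝ) ^ (r * (α j : ℝ)))) ≤ C * D ^ (∑ j, α j) * Wmat ω d lam α) :
    ω =O[atTop] (fun t : ℝ => t ^ (1 / r)) := by
  obtain ⟨C, D, hC, hD, hCD⟩ := h 1 one_pos
  have hCpos : (0:ℝ) < C := lt_of_lt_of_le one_pos hC
  have hDpos : (0:ℝ) < D := lt_of_lt_of_le one_pos hD
  have hlogC : 0 ≤ Real.log C := Real.log_nonneg hC
  have hlogD : 0 ≤ Real.log D := Real.log_nonneg hD
  haveI : Nonempty {t : ℝ // 0 ≤ t} := ⟨⟨0, le_refl 0⟩⟩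
  -- integer lower bound on the Young conjugate
  have hint : ∀ m : ℕ, 1 ≤ m →
      r * (m:ℝ) * Real.log m - (m:ℝ) * Real.log D - Real.log C ≤ youngConj ω m := by
    intro m hm1
    have hmpos : (0:ℝ) < (m:ℝ) := by exact_mod_cast hm1
    set α₀ : Fin d → ℕ := Pi.single (⟨0, hd⟩ : Fin d) m with hα₀
    have h1 := hCD α₀
    have hsum : ∑ j, α₀ j = m := by
      rw [hα₀, Finset.sum_pi_single']
      simp
    have hprod : (∏ j, ((α₀ j : ℝ) ^ (r * (α₀ j : ℝ)))) = (m:ℝ) ^ (r * (m:ℝ)) := by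
      rw [Finset.prod_eq_single (⟨0, hd⟩ : Fin d)]
      · rw [hα₀, Pi.single_eq_same]
      · intro j _ hj
        rw [hα₀, Pi.single_eq_of_ne hj]
        simp
      · intro habs
        exact absurd (Finset.mem_univ _) habs
    rw [hprod, hsum] at h1
    have hW : Wmat ω d 1 α₀ = Real.exp (youngConj ω m) := by
      rw [Wmat, hsum, one_mul, div_one]
    rw [hW] at h1
    have h2 : Real.exp (Real.log (m:ℝ) * (r * (m:ℝ)))
        ≤ Real.exp (Real.log C + (m:ℝ) * Real.log D + youngConj ω m) := by
      calc Real.exp (Real.log (m:ℝ) * (r * (m:ℝ))) = (m:ℝ) ^ (r * (m:ℝ)) :=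
            (Real.rpow_def_of_pos hmpos _).symm
        _ ≤ C * D ^ m * Real.exp (youngConj ω m) := h1
        _ = Real.exp (Real.log C + (m:ℝ) * Real.log D + youngConj ω m) := by
            rw [Real.exp_add, Real.exp_add, Real.exp_nat_mul, Real.exp_log hCpos,
              Real.exp_log hDpos]
    have h3 := Real.exp_le_exp.mp h2
    nlinarith [h3]
  -- real lower bound
  have hreal : ∀ s : ℝ, 2 ≤ s →
      r * (s-1) * Real.log (s-1) - s * Real.log D - Real.log C ≤ youngConj ω s := by
    intro s hs
    have hm1 : 1 ≤ ⌊s⌋₊ := Nat.le_floor (by exact_mod_cast (by linarith : (1:ℝ) ≤ s))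
    have hms : ((⌊s⌋₊:ℕ):ℝ) ≤ s := Nat.floor_le (by linarith)
    have hsm : s - 1 ≤ ((⌊s⌋₊:ℕ):ℝ) := by
      have := Nat.lt_floor_add_one s
      linarith
    have h1 := hint ⌊s⌋₊ hm1
    have h2 : youngConj ω (⌊s⌋₊:ℝ) ≤ youngConj ω s :=
      yc_mono ω hnonneg hγ (Nat.cast_nonneg _) hms
    have h3 : r * (s-1) * Real.log (s-1) ≤ r * ((⌊s⌋₊:ℕ):ℝ) * Real.log (⌊s⌋₊:ℕ) := by
      have := mul_log_mono (by linarith : (1:ℝ) ≤ s - 1) hsm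
      nlinarith
    have h4 : ((⌊s⌋₊:ℕ):ℝ) * Real.log D ≤ s * Real.log D :=
      mul_le_mul_of_nonneg_right hms hlogD
    linarith
  -- main pointwise estimate
  set K := r * Real.exp ((1 + Real.log D)/r) + 2*r + 4 + Real.log D + Real.log C with hK
  have hApos : (0:ℝ) ≤ r * Real.exp ((1 + Real.log D)/r) := by positivity
  have hKpos : 0 < K := by rw [hK]; positivity
  have hmain : ∀ t₀ : ℝ, 1 ≤ t₀ → ω (Real.exp t₀) ≤ K * Real.exp (t₀ / r) + K := by
    intro t₀ ht₀
    set s := ω (Real.exp t₀) - ω (Real.exp (t₀ - 1)) with hs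
    have hs0 : 0 ≤ s := sub_nonneg.mpr (hmono (Real.exp_le_exp.mpr (by linarith)))
    clear_value s
    have hsub : ∀ t : {t : ℝ // 0 ≤ t},
        (t:ℝ) * s - ω (Real.exp (t:ℝ)) ≤ t₀ * s - ω (Real.exp t₀) + s := by
      rintro ⟨t, ht⟩
      simp only
      rcases le_or_gt t₀ t with hge | hlt
      · rcases eq_or_lt_of_le hge with heq | hgt
        · rw [← heq]; linarith
        · have hsl := hconv.slope_mono_adjacent
            (show t₀ - 1 ∈ Set.Ici (0:ℝ) by simp; linarith)
            (show t ∈ Set.Ici (0:ℝ) from ht)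
            (show t₀ - 1 < t₀ by linarith) hgt
          rw [show t₀ - (t₀ - 1) = 1 by ring, div_one, ← hs] at hsl
          -- hsl : s ≤ (ω (exp t) - ω (exp t₀)) / (t - t₀)
          have h5 : s * (t - t₀) ≤ ω (Real.exp t) - ω (Real.exp t₀) := by
            rw [← le_div_iff₀ (by linarith : (0:ℝ) < t - t₀)]
            exact hsl
          have h6 : s * (t - t₀) = t * s - t₀ * s := by ring
          linarith
      · rcases lt_trichotomy t (t₀ - 1) with hlt1 | heq1 | hgt1
        · have hsl := hconv.slope_mono_adjacent
            (show t ∈ Set.Ici (0:ℝ) from ht)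
            (show t₀ ∈ Set.Ici (0:ℝ) by simp; linarith)
            hlt1 (show t₀ - 1 < t₀ by linarith)
          rw [show t₀ - (t₀ - 1) = 1 by ring, div_one, ← hs] at hsl
          -- hsl : (ω (exp (t₀-1)) - ω (exp t)) / (t₀-1-t) ≤ s
          have h5 : ω (Real.exp (t₀-1)) - ω (Real.exp t) ≤ s * (t₀ - 1 - t) := by
            rw [div_le_iff₀ (by linarith : (0:ℝ) < t₀ - 1 - t)] at hsl
            exact hsl
          have h6 : s * (t₀ - 1 - t) = t₀ * s - s - t * s := by ring
          have h7 : ω (Real.exp (t₀ - 1)) = ω (Real.exp t₀) - s := by rw [hs]; ring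
          linarith
        · rw [heq1]
          have h7 : ω (Real.exp (t₀ - 1)) = ω (Real.exp t₀) - s := by rw [hs]; ring
          have h6 : (t₀ - 1) * s = t₀ * s - s := by ring
          linarith
        · have h5 : ω (Real.exp (t₀-1)) ≤ ω (Real.exp t) :=
            hmono (Real.exp_le_exp.mpr hgt1.le)
          have h7 : ω (Real.exp (t₀ - 1)) = ω (Real.exp t₀) - s := by rw [hs]; ring
          have h6 : t * s ≤ t₀ * s := mul_le_mul_of_nonneg_right hlt.le hs0
          linarith
    have hphis : youngConj ω s ≤ t₀ * s - ω (Real.exp t₀) + s := ciSup_le hsub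
    have hE1 : (1:ℝ) ≤ Real.exp (t₀/r) := Real.one_le_exp (by positivity)
    have hexps : (0:ℝ) ≤ Real.exp (t₀/r) - 1 := by linarith
    have ht0r : t₀ ≤ r * Real.exp (t₀/r) := by
      have h6 := Real.add_one_le_exp (t₀/r)
      have h7 : t₀ / r ≤ Real.exp (t₀/r) := by linarith
      rw [div_le_iff₀ hr] at h7
      linarith [mul_comm r (Real.exp (t₀/r))]
    rcases le_or_gt 2 s with hs2 | hs2
    · have h1 := hreal s hs2
      have h2 := key_bound r hr (s-1) (t₀ + 1 + Real.log D) (by linarith)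
      have h3 : Real.exp ((t₀ + 1 + Real.log D)/r)
          = Real.exp ((1 + Real.log D)/r) * Real.exp (t₀/r) := by
        rw [← Real.exp_add]
        congr 1
        field_simp
        ring
      rw [h3] at h2
      have hiden : t₀*s + s + s*Real.log D - r*(s-1)*Real.log (s-1)
          = (s-1)*((t₀+1+Real.log D) - r*Real.log (s-1)) + (t₀+1+Real.log D) := by ring
      have h9 : ω (Real.exp t₀) ≤ r * Real.exp ((1 + Real.log D)/r) * Real.exp (t₀/r)
          + t₀ + 1 + Real.log D + Real.log C := by linarith
      rw [hK]
      have e1 : 0 ≤ Real.log D * (Real.exp (t₀/r) - 1) := mul_nonneg hlogD hexps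
      have e2 : 0 ≤ Real.log C * (Real.exp (t₀/r) - 1) := mul_nonneg hlogC hexps
      have e3 : 0 ≤ r * (Real.exp (t₀/r) - 1) := mul_nonneg hr.le hexps
      linarith [h9, ht0r, e1, e2, e3, hE1, hApos, hr.le, hlogD, hlogC,
        mul_nonneg hApos (Real.exp_nonneg (t₀/r))]
    · have h1 : 0 ≤ youngConj ω s := yc_nonneg ω hnonneg hω1' hγ hs0
      have h5 : t₀ * s ≤ t₀ * 2 := mul_le_mul_of_nonneg_left hs2.le (by linarith)
      have h2 : ω (Real.exp t₀) ≤ 2*t₀ + 2 := by linarith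
      rw [hK]
      have e1 : 0 ≤ Real.log D * Real.exp (t₀/r) :=
        mul_nonneg hlogD (Real.exp_nonneg _)
      have e2 : 0 ≤ Real.log C * Real.exp (t₀/r) :=
        mul_nonneg hlogC (Real.exp_nonneg _)
      have e3 : 0 ≤ r * Real.exp ((1 + Real.log D)/r) * Real.exp (t₀/r) :=
        mul_nonneg hApos (Real.exp_nonneg _)
      linarith [h2, ht0r, e1, e2, e3, hE1, hApos, hr.le, hlogD, hlogC]
  -- conclude
  rw [isBigO_iff]
  refine ⟨2*K, ?_⟩
  filter_upwards [Filter.eventually_ge_atTop (Real.exp 1)] with t ht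
  have he1 : (1:ℝ) ≤ Real.exp 1 := Real.one_le_exp zero_le_one
  have ht1 : (1:ℝ) ≤ t := le_trans he1 ht
  have ht0 : (0:ℝ) < t := by linarith
  have hlog1 : 1 ≤ Real.log t := by
    have := Real.log_le_log (Real.exp_pos 1) ht
    rwa [Real.log_exp] at this
  have hm := hmain (Real.log t) hlog1
  rw [Real.exp_log ht0] at hm
  have hre : Real.exp (Real.log t / r) = t ^ (1/r) := by
    rw [Real.rpow_def_of_pos ht0, mul_one_div]
  rw [hre] at hm
  have hrp1 : (1:ℝ) ≤ t^(1/r) := by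
    have := Real.rpow_le_rpow zero_le_one ht1 (by positivity : (0:ℝ) ≤ 1/r)
    rwa [Real.one_rpow] at this
  rw [Real.norm_eq_abs, Real.norm_eq_abs, abs_of_nonneg (hnonneg t ht0.le),
    abs_of_nonneg (by positivity : (0:ℝ) ≤ t^(1/r))]
  linarith [hm, mul_nonneg hKpos.le (by linarith : (0:ℝ) ≤ t^(1/r) - 1)]

/-- `ω(t) = O(t^{1/r})` as `t → ∞` iff for every `λ > 0` there are
`C, D ≥ 1` with `α^{rα} ≤ C D^{|α|} W_α^{(λ)}` for all `α`, where
`α^{rα} = ∏_j α_j^{r α_j}` (with the convention `0^0 = 1`, via `rpow`). -/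
theorem stmt18 (ω : ℝ → ℝ) (hcont : Continuous ω) (hmono : Monotone ω)
    (hnonneg : ∀ t, 0 ≤ t → 0 ≤ ω t) (hω1 : ∀ t ∈ Set.Icc (0 : ℝ) 1, ω t = 0)
    (hα : ∃ L : ℝ, 1 ≤ L ∧ ∀ t : ℝ, 0 ≤ t → ω (2 * t) ≤ L * (ω t + 1))
    (hconv : ConvexOn ℝ (Set.Ici 0) (fun t => ω (Real.exp t)))
    (hγ : (fun t => Real.log t) =o[Filter.atTop] ω)
    (d : ℕ) (hd : 0 < d) (r : ℝ) (hr : 0 < r) :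
    ω =O[atTop] (fun t : ℝ => t ^ (1 / r)) ↔
      ∀ lam : ℝ, 0 < lam → ∃ C D : ℝ, 1 ≤ C ∧ 1 ≤ D ∧ ∀ α : Fin d → ℕ,
        (∏ j, ((α j : ℝ) ^ (r * (α j : ℝ)))) ≤ C * D ^ (∑ j, α j) * Wmat ω d lam α := by
  have hω1' : ω 1 = 0 := hω1 1 ⟨zero_le_one, le_refl 1⟩
  constructor
  · intro hO lam hlam
    obtain ⟨c, hcpos, hc⟩ := hO.exists_pos
    rw [isBigOWith_iff] at hc
    obtain ⟨T, hT⟩ := Filter.eventually_atTop.mp hc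
    set T₁ := max T 1 with hT₁def
    have hT₁pos : (0:ℝ) < T₁ := lt_of_lt_of_le one_pos (le_max_right _ _)
    have hT₁bd : ∀ t : ℝ, T₁ ≤ t → ω t ≤ c * t ^ (1/r) := by
      intro t ht
      have h1 := hT t (le_trans (le_max_left _ _) ht)
      have h2 : (0:ℝ) ≤ t := le_trans hT₁pos.le ht
      rw [Real.norm_eq_abs, Real.norm_eq_abs,
        abs_of_nonneg (Real.rpow_nonneg h2 _)] at h1
      exact le_trans (le_abs_self _) h1
    set c₁ := max 1 (max c (c * T₁ ^ (1/r))) with hc₁def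
    have hc₁1 : (1:ℝ) ≤ c₁ := le_max_left _ _
    have hc₁c : c ≤ c₁ := le_trans (le_max_left _ _) (le_max_right _ _)
    have hbound : ∀ t : ℝ, 0 ≤ t → ω t ≤ c₁ * t ^ (1/r) + c₁ := by
      intro t ht
      have hrp : (0:ℝ) ≤ t ^ (1/r) := Real.rpow_nonneg ht _
      rcases le_or_gt T₁ t with h | h
      · have h1 := hT₁bd t h
        have h2 : c * t^(1/r) ≤ c₁ * t^(1/r) := mul_le_mul_of_nonneg_right hc₁c hrp
        linarith
      · have h2 : ω t ≤ ω T₁ := hmono h.le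
        have h3 : ω T₁ ≤ c * T₁^(1/r) := hT₁bd T₁ le_rfl
        have h4 : c * T₁^(1/r) ≤ c₁ := le_trans (le_max_right c _) (le_max_right 1 _)
        have h5 : (0:ℝ) ≤ c₁ * t^(1/r) := mul_nonneg (by linarith) hrp
        linarith
    refine ⟨Real.exp (c₁/lam), Real.exp (c₁/lam),
      Real.one_le_exp (by positivity), Real.one_le_exp (by positivity), ?_⟩
    intro α
    set m := ∑ j, α j with hm
    rcases Nat.eq_zero_or_pos m with hm0 | hm1
    · have hall : ∀ j, α j = 0 := by
        intro j
        have := (Finset.sum_eq_zero_iff.mp (hm.symm.trans hm0)) j (Finset.mem_univ j)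
        exact this
      have hprod : (∏ j, ((α j : ℝ) ^ (r * (α j : ℝ)))) = 1 := by
        apply Finset.prod_eq_one
        intro j _
        rw [hall j]
        simp
      rw [hprod, hm0]
      simp only [pow_zero, Nat.cast_zero, mul_one]
      have h1 : (1:ℝ) ≤ Real.exp (c₁/lam) := Real.one_le_exp (by positivity)
      have h2 : (1:ℝ) ≤ Wmat ω d lam α := by
        rw [Wmat, ← hm, hm0]
        apply Real.one_le_exp
        apply div_nonneg _ hlam.le
        exact yc_nonneg ω hnonneg hω1' hγ (by simp)
      nlinarith
    · have hmpos : (0:ℝ) < (m:ℝ) := by exact_mod_cast hm1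
      have hm1' : (1:ℝ) ≤ (m:ℝ) := by exact_mod_cast hm1
      have hstep1 : (∏ j, ((α j : ℝ) ^ (r * (α j : ℝ)))) ≤ (m:ℝ) ^ (r * (m:ℝ)) := by
        have h1 : ∀ j ∈ Finset.univ, ((α j:ℝ))^(r*(α j:ℝ)) ≤ (m:ℝ)^(r*(α j:ℝ)) := by
          intro j _
          refine Real.rpow_le_rpow (Nat.cast_nonneg _) ?_ (by positivity)
          exact_mod_cast Finset.single_le_sum (fun i _ => Nat.zero_le _) (Finset.mem_univ j)
        calc (∏ j, ((α j : ℝ) ^ (r * (α j : ℝ))))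
            ≤ ∏ j, (m:ℝ)^(r * (α j:ℝ)) := Finset.prod_le_prod
              (fun j _ => Real.rpow_nonneg (Nat.cast_nonneg _) _) h1
          _ = ∏ j, Real.exp (Real.log m * (r * (α j:ℝ))) :=
              Finset.prod_congr rfl fun j _ => Real.rpow_def_of_pos hmpos _
          _ = Real.exp (∑ j, Real.log m * (r * (α j:ℝ))) := (Real.exp_sum _ _).symm
          _ = (m:ℝ)^(r*(m:ℝ)) := by
              rw [Real.rpow_def_of_pos hmpos]
              congr 1
              rw [← Finset.mul_sum]
              congr 1
              rw [← Finset.mul_sum]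
              congr 1
              rw [hm, Nat.cast_sum]
      have hlogm : (0:ℝ) ≤ Real.log m := Real.log_nonneg hm1'
      have hycb : lam * (r * (m:ℝ) * Real.log m) - c₁ * m - c₁ ≤ youngConj ω (lam * m) := by
        have h0 : (0:ℝ) ≤ r * Real.log m := by positivity
        have h1 := le_ciSup (yc_bddAbove ω hnonneg hγ
          (by positivity : (0:ℝ) ≤ lam * m)) (⟨r * Real.log m, h0⟩ : {t:ℝ // 0 ≤ t})
        simp only at h1
        have hexp : Real.exp (r * Real.log m) = (m:ℝ)^r := by
          rw [Real.rpow_def_of_pos hmpos, mul_comm]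
        have hω2 : ω ((m:ℝ)^r) ≤ c₁ * m + c₁ := by
          have h2 := hbound ((m:ℝ)^r) (Real.rpow_nonneg hmpos.le _)
          have hrr : ((m:ℝ)^r)^(1/r) = (m:ℝ) := by
            rw [← Real.rpow_mul hmpos.le, mul_one_div, div_self hr.ne', Real.rpow_one]
          rw [hrr] at h2
          exact h2
        rw [hexp] at h1
        have : lam * (r * (m:ℝ) * Real.log m) - c₁ * m - c₁
            ≤ (r * Real.log m) * (lam * m) - ω ((m:ℝ)^r) := by nlinarith
        exact le_trans this h1
      calc (∏ j, ((α j : ℝ) ^ (r * (α j : ℝ)))) ≤ (m:ℝ)^(r*(m:ℝ)) := hstep1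
        _ = Real.exp (Real.log m * (r*(m:ℝ))) := Real.rpow_def_of_pos hmpos _
        _ ≤ Real.exp (c₁/lam + (m:ℝ)*(c₁/lam) + youngConj ω (lam*m)/lam) := by
            rw [Real.exp_le_exp]
            rw [show c₁/lam + (m:ℝ)*(c₁/lam) + youngConj ω (lam*(m:ℝ))/lam
              = (c₁ + (m:ℝ)*c₁ + youngConj ω (lam*(m:ℝ)))/lam from by ring]
            rw [le_div_iff₀ hlam]
            nlinarith [hycb]
        _ = Real.exp (c₁/lam) * Real.exp (c₁/lam) ^ m * Wmat ω d lam α := by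
            rw [Wmat, ← hm, ← Real.exp_nat_mul, ← Real.exp_add, ← Real.exp_add]
  · intro h
    exact rev_dir ω hcont hmono hnonneg hω1 hα hconv hγ d hd r hr hω1' h
end
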